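/- Fix μ₁ < μ₂ ∈ ℝ, π ∈ (0,1) and x ∈ ℝ with x < (μ₁+μ₂)/2. Writing p_σ(x) = π φ_{μ₁,σ}(x) + (1−π) φ_{μ₂,σ}(x), one has s_{p_σ}(x) + (x−μ₁)/σ² → 0 as σ → 0⁺; that is, the mixture score converges to the score of the left Gaussian component even though both quantities individually diverge. -/

import Mathlib

open MeasureTheory Filter

/-- Gaussian density with mean `μ` and standard deviation `σ`. -/
noncomputable def gaussian (μ σ : ℝ) (x : ℝ) : ℝ :=
  (σ * Real.sqrt (2 * Real.pi))⁻¹ * Real.exp (-(x - μ) ^ 2 / (2 * σ ^ 2))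

/-- The score of a density `ρ`: the derivative of its log. -/
noncomputable def score (ρ : ℝ → ℝ) (x : ℝ) : ℝ :=
  deriv (fun y => Real.log (ρ y)) x

/-- Fisher divergence between densities `q` and `p`. -/
noncomputable def fisherDiv (q p : ℝ → ℝ) : ℝ :=
  ∫ x : ℝ, q x * (score q x - score p x) ^ 2

/-!
Both Gaussian scores blow up like `1/σ²`, but their difference is `(μ₂ - μ₁)/σ²`, and the
mixture score differs from the left one by that difference weighted with the posterior
probability of the right component. Left of the midpoint this probability is at most a
constant times `exp (c/σ²)` with `c < 0`, which beats the factor `1/σ²`.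
-/

open Real

lemma gaussian_pos (μ : ℝ) {σ : ℝ} (hσ : 0 < σ) (x : ℝ) : 0 < gaussian μ σ x := by
  unfold gaussian
  positivity

lemma hasDerivAt_gaussian (μ : ℝ) {σ : ℝ} (hσ : σ ≠ 0) (x : ℝ) :
    HasDerivAt (gaussian μ σ) (-((x - μ) / σ ^ 2) * gaussian μ σ x) x := by
  have hexponent : HasDerivAt (fun y : ℝ => -(y - μ) ^ 2 / (2 * σ ^ 2))
      (-(2 * (x - μ)) / (2 * σ ^ 2)) x := by
    simpa using (((hasDerivAt_id x).sub_const μ).fun_pow 2).neg.div_const (2 * σ ^ 2)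
  refine (hexponent.exp.const_mul (σ * √(2 * π))⁻¹).congr_deriv ?_
  unfold gaussian
  field_simp

lemma gaussian_div_gaussian (μ₁ μ₂ : ℝ) {σ : ℝ} (hσ : σ ≠ 0) (x : ℝ) :
    gaussian μ₂ σ x / gaussian μ₁ σ x = exp (((x - μ₁) ^ 2 - (x - μ₂) ^ 2) / 2 / σ ^ 2) := by
  unfold gaussian
  rw [mul_div_mul_left _ _ (by positivity), ← exp_sub]
  congr 1
  field_simp
  ring

lemma score_mixture_sub {p q : ℝ → ℝ} {a b s t x : ℝ} (hp : HasDerivAt p (s * p x) x)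
    (hq : HasDerivAt q (t * q x) x) (hmix : a * p x + b * q x ≠ 0) :
    score (fun y => a * p y + b * q y) x - s
      = b * q x * (t - s) / (a * p x + b * q x) := by
  rw [score, (((hp.const_mul a).fun_add (hq.const_mul b)).log hmix).deriv]
  field_simp
  ring

lemma score_gaussian_mixture_add_div_sq {μ₁ μ₂ a b σ : ℝ} (hσ : σ ≠ 0) {x : ℝ}
    (hmix : a * gaussian μ₁ σ x + b * gaussian μ₂ σ x ≠ 0) :
    score (fun y => a * gaussian μ₁ σ y + b * gaussian μ₂ σ y) x + (x - μ₁) / σ ^ 2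
      = b * gaussian μ₂ σ x * ((μ₂ - μ₁) / σ ^ 2)
          / (a * gaussian μ₁ σ x + b * gaussian μ₂ σ x) := by
  have h := score_mixture_sub (hasDerivAt_gaussian μ₁ hσ x) (hasDerivAt_gaussian μ₂ hσ x) hmix
  rw [sub_neg_eq_add] at h
  rw [h]
  ring

lemma mul_div_add_le {a b p q d : ℝ} (ha : 0 < a) (hp : 0 < p) (hb : 0 ≤ b) (hq : 0 ≤ q)
    (hd : 0 ≤ d) : b * q * d / (a * p + b * q) ≤ b / a * (q / p) * d := by
  calc b * q * d / (a * p + b * q) ≤ b * q * d / (a * p) := by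
        gcongr
        exact le_add_of_nonneg_right (by positivity)
    _ = b / a * (q / p) * d := by field_simp

lemma tendsto_exp_div_sq_div_sq {c : ℝ} (hc : c < 0) :
    Tendsto (fun σ : ℝ => exp (c / σ ^ 2) / σ ^ 2) (nhdsWithin 0 (Set.Ioi 0)) (nhds 0) := by
  have hmul : Tendsto (fun v : ℝ => v * exp (c * v)) atTop (nhds 0) := by
    simpa using tendsto_rpow_mul_exp_neg_mul_atTop_nhds_zero 1 (-c) (neg_pos.mpr hc)
  have hinv_sq : Tendsto (fun σ : ℝ => σ⁻¹ ^ 2) (nhdsWithin 0 (Set.Ioi 0)) atTop :=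
    (tendsto_pow_atTop two_ne_zero).comp tendsto_inv_nhdsGT_zero
  refine (hmul.comp hinv_sq).congr fun σ => ?_
  rw [Function.comp_apply, inv_pow, ← div_eq_mul_inv, inv_mul_eq_div]

/-- left of the midpoint, as `σ → 0⁺` the mixture score converges to
the score of the left Gaussian component. -/
theorem mixture_score_left_of_midpoint (μ₁ μ₂ w : ℝ) (hμ : μ₁ < μ₂)
    (hw : w ∈ Set.Ioo (0 : ℝ) 1) (x : ℝ) (hx : x < (μ₁ + μ₂) / 2) :
    Tendsto
      (fun σ => score (fun y => w * gaussian μ₁ σ y + (1 - w) * gaussian μ₂ σ y) x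
        + (x - μ₁) / σ ^ 2)
      (nhdsWithin 0 (Set.Ioi 0)) (nhds 0) := by
  obtain ⟨hw₀, hw₁⟩ := hw
  have hw₁' : 0 < 1 - w := sub_pos.mpr hw₁
  set c := ((x - μ₁) ^ 2 - (x - μ₂) ^ 2) / 2 with hc_def
  have hc : c < 0 := by rw [hc_def]; nlinarith
  have hbound : Tendsto (fun σ : ℝ => (1 - w) / w * (exp (c / σ ^ 2) / σ ^ 2) * (μ₂ - μ₁))
      (nhdsWithin 0 (Set.Ioi 0)) (nhds 0) := by
    simpa using ((tendsto_exp_div_sq_div_sq hc).const_mul ((1 - w) / w)).mul_const (μ₂ - μ₁)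
  refine squeeze_zero' ?_ ?_ hbound <;>
    filter_upwards [self_mem_nhdsWithin] with σ (hσ : 0 < σ)
  all_goals
    have hg₁ := gaussian_pos μ₁ hσ x
    have hg₂ := gaussian_pos μ₂ hσ x
    rw [score_gaussian_mixture_add_div_sq hσ.ne' (by positivity)]
  · positivity
  · calc _ ≤ (1 - w) / w * (gaussian μ₂ σ x / gaussian μ₁ σ x) * ((μ₂ - μ₁) / σ ^ 2) :=
          mul_div_add_le hw₀ hg₁ hw₁'.le hg₂.le (by positivity)
      _ = _ := by rw [gaussian_div_gaussian μ₁ μ₂ hσ.ne']; ring
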